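/- Let k ≥ 2 and define w_n by w_0 = ε, w_{n+1} = (w_n δ_{n+1})^E with δ_1 = 0 and δ_2 = ⋯ = δ_{k+1} = 1. Then w_{k+1} = 01 1001 (1001)^{k-1} = 01(1001)^k, and {2, 4} is a string attractor of w_{k+1} of size two. -/

import Mathlib

def occursAt (f w : List Bool) (i : ℕ) : Prop :=
  i + f.length ≤ w.length ∧ (w.drop i).take f.length = f

def IsAttractor (w : List Bool) (Γ : Finset ℕ) : Prop :=
  (∀ γ ∈ Γ, γ < w.length) ∧
  ∀ f : List Bool, f ≠ [] → f <:+: w →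
    ∃ i, occursAt f w i ∧ ∃ γ ∈ Γ, i ≤ γ ∧ γ < i + f.length

def Emap (w : List Bool) : List Bool := (w.reverse).map (fun b => !b)

def IsPal (w : List Bool) : Prop := w.reverse = w

def IsAntipal (w : List Bool) : Prop := Emap w = w

def IsPalClosure (w p : List Bool) : Prop :=
  IsPal p ∧ w <+: p ∧ ∀ q, IsPal q → w <+: q → p.length ≤ q.length

def IsAntipalClosure (w p : List Bool) : Prop :=
  IsAntipal p ∧ w <+: p ∧ ∀ q, IsAntipal q → w <+: q → p.length ≤ q.length

/-! The closures are forced: an antipalindrome has even length, and one of length `4n+4` extending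
`01(1001)^n 1` would carry `1` at the mirror positions `1` and `4n+2`; so `w (n+1) = 01(1001)^n`.
This word is the prefix of length `4n+2` of `(0110)^ω`, so each factor recurs every four
positions, and a case split on the residue mod 4 of an occurrence and on the factor's length
finds an occurrence over `2` or `4`. -/

lemma Emap_length (v : List Bool) : (Emap v).length = v.length := by
  simp [Emap]

lemma Emap_append (a b : List Bool) : Emap (a ++ b) = Emap b ++ Emap a := by
  simp [Emap]

lemma Emap_Emap (a : List Bool) : Emap (Emap a) = a := by
  simp [Emap, List.map_reverse, Function.comp_def]

lemma getElem?_Emap (v : List Bool) {i : ℕ} (hi : i < v.length) :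
    (Emap v)[i]? = v[v.length - 1 - i]?.map (!·) := by
  rw [Emap, List.getElem?_map, List.getElem?_reverse hi]

lemma IsAntipal.getElem?_eq {q : List Bool} (hq : IsAntipal q) {i j : ℕ}
    (hij : i + j + 1 = q.length) : q[j]? = q[i]?.map (!·) := by
  conv_lhs => rw [← hq]
  rw [getElem?_Emap q (by omega), show q.length - 1 - j = i by omega]

lemma IsAntipal.even_length {q : List Bool} (hq : IsAntipal q) : Even q.length := by
  by_contra hodd
  obtain ⟨m, hm⟩ := Nat.not_even_iff_odd.mp hodd
  have hmid := hq.getElem?_eq (i := m) (j := m) (by omega)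
  rw [List.getElem?_eq_getElem (by omega)] at hmid
  simp at hmid

lemma List.IsPrefix.getElem?_eq {α : Type*} {x p : List α} (h : x <+: p) {i : ℕ}
    (hi : i < x.length) : p[i]? = x[i]? := by
  rw [List.prefix_iff_getElem?.mp h i hi, List.getElem?_eq_getElem hi]

/-- Both closures are no longer than `x ++ Emap x`, so every letter past `x` mirrors one of `x`. -/
lemma IsAntipalClosure.unique {x p q : List Bool} (hp : IsAntipalClosure x p)
    (hq : IsAntipalClosure x q) : p = q := by
  obtain ⟨hp, hxp, hpmin⟩ := hp
  obtain ⟨hq, hxq, hqmin⟩ := hq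
  have hle : p.length ≤ x.length + x.length := by
    have hcand : IsAntipal (x ++ Emap x) := by rw [IsAntipal, Emap_append, Emap_Emap]
    simpa [Emap_length] using hpmin _ hcand (List.prefix_append x (Emap x))
  have hlen : p.length = q.length := le_antisymm (hpmin q hq hxq) (hqmin p hp hxp)
  have hx := hxp.length_le
  apply List.ext_getElem?
  intro i
  by_cases hi : i < p.length
  · by_cases hix : i < x.length
    · rw [hxp.getElem?_eq hix, hxq.getElem?_eq hix]
    · have hmirror : p.length - 1 - i + i + 1 = p.length := by omega
      rw [hp.getElem?_eq hmirror, hq.getElem?_eq (hlen ▸ hmirror),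
        hxp.getElem?_eq (by omega), hxq.getElem?_eq (by omega), hlen]
  · rw [List.getElem?_eq_none (by omega), List.getElem?_eq_none (by omega)]

/-- The `i`-th letter of the periodic word `(0110)^ω`. -/
def altBit (i : ℕ) : Bool := decide (i % 4 = 1 ∨ i % 4 = 2)

lemma altBit_reflect {n i : ℕ} (hi : i ≤ 4 * n + 1) : altBit (4 * n + 1 - i) = !altBit i := by
  by_cases h : i % 4 = 1 ∨ i % 4 = 2 <;> simp [altBit, h] <;> omega

def blockWord (n : ℕ) : List Bool :=
  [false, true] ++ (List.replicate n [true, false, false, true]).flatten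

lemma blockWord_succ (n : ℕ) : blockWord (n + 1) = blockWord n ++ [true, false, false, true] := by
  simp [blockWord, List.replicate_succ']

lemma length_blockWord (n : ℕ) : (blockWord n).length = 4 * n + 2 := by
  induction n with
  | zero => rfl
  | succ m ih => simp [blockWord_succ, ih]; omega

lemma getElem?_blockWord {n i : ℕ} (hi : i < 4 * n + 2) :
    (blockWord n)[i]? = some (altBit i) := by
  induction n generalizing i with
  | zero => interval_cases i <;> rfl
  | succ m ih =>
    rw [blockWord_succ]
    by_cases h : i < 4 * m + 2
    · rw [List.getElem?_append_left (by rw [length_blockWord]; exact h), ih h]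
    · obtain ⟨t, ht, rfl⟩ : ∃ t < 4, i = 4 * m + 2 + t := ⟨i - (4 * m + 2), by omega, by omega⟩
      rw [List.getElem?_append_right (by rw [length_blockWord]; omega), length_blockWord,
        Nat.add_sub_cancel_left]
      interval_cases t <;> simp [altBit] <;> omega

lemma isAntipal_blockWord (n : ℕ) : IsAntipal (blockWord n) := by
  apply List.ext_getElem?
  intro i
  by_cases hi : i < 4 * n + 2
  · rw [getElem?_Emap _ (by rw [length_blockWord]; exact hi), length_blockWord,
      getElem?_blockWord (by omega), getElem?_blockWord hi, Option.map_some,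
      show 4 * n + 2 - 1 - i = 4 * n + 1 - i by omega, altBit_reflect (by omega), Bool.not_not]
  · rw [List.getElem?_eq_none (by rw [Emap_length, length_blockWord]; omega),
      List.getElem?_eq_none (by rw [length_blockWord]; omega)]

lemma isAntipalClosure_blockWord_zero : IsAntipalClosure [false] (blockWord 0) := by
  refine ⟨isAntipal_blockWord 0, ⟨[true], rfl⟩, fun q hq hpre => ?_⟩
  have hne : q.length ≠ 1 := fun h => by simpa [h] using hq.even_length
  have := hpre.length_le
  simp only [List.length_singleton] at this
  rw [length_blockWord]
  omega

lemma isAntipalClosure_blockWord_succ (n : ℕ) :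
    IsAntipalClosure (blockWord n ++ [true]) (blockWord (n + 1)) := by
  refine ⟨isAntipal_blockWord (n + 1), ⟨[false, false, true], by simp [blockWord_succ]⟩,
    fun q hq hpre => ?_⟩
  have hlen : (blockWord n ++ [true]).length = 4 * n + 3 := by simp [length_blockWord]
  have hge := hpre.length_le
  have heven := hq.even_length
  rw [length_blockWord]
  by_contra! hlt
  have hq4 : q.length = 4 * n + 4 := by
    obtain ⟨m, hm⟩ := heven
    omega
  have hone : q[1]? = some true := by
    rw [hpre.getElem?_eq (by omega), List.getElem?_append_left (by rw [length_blockWord]; omega),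
      getElem?_blockWord (by omega)]
    rfl
  have hlast : q[4 * n + 2]? = some true := by
    rw [hpre.getElem?_eq (by omega), List.getElem?_append_right (by rw [length_blockWord]),
      length_blockWord, Nat.sub_self]
    rfl
  have := hq.getElem?_eq (i := 1) (j := 4 * n + 2) (by omega)
  rw [hone, hlast] at this
  simp at this

lemma eq_blockWord_of_isAntipalClosure {k : ℕ} {w : ℕ → List Bool} (h0 : w 0 = [])
    (h1 : IsAntipalClosure (w 0 ++ [false]) (w 1))
    (hclos : ∀ n, 1 ≤ n → n ≤ k → IsAntipalClosure (w n ++ [true]) (w (n + 1))) :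
    ∀ n ≤ k, w (n + 1) = blockWord n := by
  intro n
  induction n with
  | zero =>
    rw [h0, List.nil_append] at h1
    exact fun _ => h1.unique isAntipalClosure_blockWord_zero
  | succ m ih =>
    intro hm
    have hc := hclos (m + 1) (by omega) hm
    rw [ih (by omega)] at hc
    exact hc.unique (isAntipalClosure_blockWord_succ m)

lemma occursAt_iff {f v : List Bool} {i : ℕ} :
    occursAt f v i ↔ i + f.length ≤ v.length ∧ ∀ t < f.length, v[i + t]? = f[t]? := by
  refine and_congr_right fun hlen => ⟨fun h t ht => ?_, fun h => List.ext_getElem? fun t => ?_⟩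
  · rw [← h, List.getElem?_take_of_lt ht, List.getElem?_drop]
  · by_cases ht : t < f.length
    · rw [List.getElem?_take_of_lt ht, List.getElem?_drop, h t ht]
    · rw [List.getElem?_eq_none (by simp; omega), List.getElem?_eq_none (by omega)]

lemma exists_occursAt_of_infix {f v : List Bool} (h : f <:+: v) : ∃ i, occursAt f v i := by
  obtain ⟨i, hlen, hget⟩ := List.infix_iff_getElem?.mp h
  refine ⟨i, occursAt_iff.mpr ⟨by omega, fun t ht => ?_⟩⟩
  rw [Nat.add_comm, hget t ht, List.getElem?_eq_getElem ht]

lemma blockWord_occursAt_of_mod_eq {n i j : ℕ} {f : List Bool} (h : occursAt f (blockWord n) j)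
    (hij : i % 4 = j % 4) (hi : i + f.length ≤ 4 * n + 2) : occursAt f (blockWord n) i := by
  rw [occursAt_iff, length_blockWord] at h ⊢
  refine ⟨hi, fun t ht => ?_⟩
  rw [← h.2 t ht, getElem?_blockWord (by omega), getElem?_blockWord (by omega)]
  simp only [altBit, Nat.add_mod i, Nat.add_mod j, hij]

lemma blockWord_occursAt_singleton {n i : ℕ} (hi : i < 4 * n + 2) :
    occursAt [altBit i] (blockWord n) i := by
  rw [occursAt_iff, length_blockWord]
  refine ⟨hi, fun t ht => ?_⟩
  obtain rfl : t = 0 := by simpa using ht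
  exact getElem?_blockWord hi

lemma isAttractor_blockWord {n : ℕ} (hn : 1 ≤ n) : IsAttractor (blockWord n) {2, 4} := by
  refine ⟨by simp [length_blockWord]; omega, fun f hf hinf => ?_⟩
  obtain ⟨j, hj⟩ := exists_occursAt_of_infix hinf
  have hfit := (occursAt_iff.mp hj).1
  rw [length_blockWord] at hfit
  have hpos : 0 < f.length := List.length_pos_iff.mpr hf
  have hocc : ∀ i, i % 4 = j % 4 → i + f.length ≤ 4 * n + 2 → occursAt f (blockWord n) i :=
    fun i => blockWord_occursAt_of_mod_eq hj
  rcases Nat.lt_or_ge f.length 2 with hone | htwo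
  · obtain ⟨b, rfl⟩ := List.length_eq_one_iff.mp (show f.length = 1 by omega)
    cases b
    · exact ⟨4, blockWord_occursAt_singleton (i := 4) (by omega), 4, by simp, le_rfl, by simp⟩
    · exact ⟨2, blockWord_occursAt_singleton (i := 2) (by omega), 2, by simp, le_rfl, by simp⟩
  have hr : j % 4 < 4 := Nat.mod_lt _ (by norm_num)
  have hj4 : j % 4 ≤ j := Nat.mod_le j 4
  by_cases h3 : j % 4 = 3
  · exact ⟨3, hocc 3 (by omega) (by omega), 4, by simp, by omega, by omega⟩
  by_cases h0 : j % 4 = 0 ∧ f.length = 2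
  · exact ⟨4, hocc 4 (by omega) (by omega), 4, by simp, le_rfl, by omega⟩
  exact ⟨j % 4, hocc _ (Nat.mod_mod j 4) (by omega), 2, by simp, by omega, by omega⟩

theorem stmt_15 (k : ℕ) (hk : 2 ≤ k) (w : ℕ → List Bool)
    (h0 : w 0 = [])
    (h1 : IsAntipalClosure (w 0 ++ [false]) (w 1))
    (hclos : ∀ n, 1 ≤ n → n ≤ k → IsAntipalClosure (w n ++ [true]) (w (n + 1))) :
    w (k + 1) = [false, true] ++ (List.replicate k [true, false, false, true]).flatten ∧
    IsAttractor (w (k + 1)) ({2, 4} : Finset ℕ) ∧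
    ({2, 4} : Finset ℕ).card = 2 := by
  rw [eq_blockWord_of_isAntipalClosure h0 h1 hclos k le_rfl]
  exact ⟨rfl, isAttractor_blockWord (by omega), rfl⟩
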